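/- arXiv:2507.12047 — 3 statements merged into one kernel-verified Lean document; each statement's English description precedes it below -/
import Mathlib

section
/- Let (G, f) be a self-deleting graph and let P = (v₁, e₁, …, e_{k−1}, v_k) be a shortest f-conforming v₁-v_k path. Let G_P be the subgraph of G induced by the vertices of P, and suppose |f(v)| ≤ μ for all v. Then G_P has at most kμ + k − 1 edges. -/
/-!
Every edge of `G_P` joins two vertices `a`, `b` of `P`, say with `a` first. If it is not an edge
of `P` and lies in no `f(v)` with `v` on `P` up to `a`, then replacing the segment of `P` from `a`
to `b` (of length at least two) by the edge `ab` yields a shorter `f`-conforming path. Hence the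
edges of `G_P` are among the `k - 1` edges of `P` and the at most `kμ` edges of the sets `f(v)`,
`v` on `P`.
-/

/-- A walk `(v₁, e₁, …, e_{k-1}, v_k)` in a self-deleting graph `(G, f)` is
`f`-conforming if `eᵢ ∉ f(vⱼ)` whenever `j ≤ i` (1-based; here 0-based indices). -/
def Conforming {V : Type*} {G : SimpleGraph V} (f : V → Set (Sym2 V))
    {u v : V} (p : G.Walk u v) : Prop :=
  ∀ (i j : ℕ) (hi : i < p.edges.length) (hj : j < p.support.length),
    j ≤ i → p.edges.get ⟨i, hi⟩ ∉ f (p.support.get ⟨j, hj⟩)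

open SimpleGraph

section Conforming

variable {V : Type*} {G : SimpleGraph V} {f : V → Set (Sym2 V)}

theorem conforming_iff_forall_drop {u v : V} (p : G.Walk u v) :
    Conforming f p ↔ ∀ (j : ℕ) (hj : j < p.support.length), ∀ e ∈ p.edges.drop j,
      e ∉ f p.support[j] := by
  constructor
  · intro h j hj e he
    obtain ⟨k, hk, rfl⟩ := List.mem_iff_getElem.mp he
    rw [List.getElem_drop]
    exact h _ j _ hj (by omega)
  · intro h i j hi hj hji
    refine h j hj _ (List.mem_iff_getElem.mpr ⟨i - j, by rw [List.length_drop]; omega, ?_⟩)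
    rw [List.getElem_drop]
    congr 1
    omega

theorem conforming_nil {u : V} : Conforming f (Walk.nil : G.Walk u u) := by
  intro i j hi; simp at hi

theorem conforming_cons_iff {u v w : V} (h : G.Adj u v) (p : G.Walk v w) :
    Conforming f (Walk.cons h p) ↔
      (∀ e ∈ (Walk.cons h p).edges, e ∉ f u) ∧ Conforming f p := by
  simp only [conforming_iff_forall_drop, Walk.support_cons, List.length_cons]
  constructor
  · intro hc
    exact ⟨hc 0 (by omega), fun j hj => hc (j + 1) (by omega)⟩
  · rintro ⟨h0, hs⟩ (_ | j) hj
    · exact h0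
    · exact hs j (by omega)

theorem Conforming.edges_notMem_start {u v : V} {p : G.Walk u v} (hp : Conforming f p) :
    ∀ e ∈ p.edges, e ∉ f u := by
  cases p with
  | nil => simp
  | cons h p => exact ((conforming_cons_iff h p).mp hp).1

theorem conforming_append_iff {u v w : V} (p : G.Walk u v) (q : G.Walk v w) :
    Conforming f (p.append q) ↔
      Conforming f p ∧ Conforming f q ∧ ∀ x ∈ p.support, ∀ e ∈ q.edges, e ∉ f x := by
  induction p with
  | nil =>
    simp only [Walk.nil_append, Walk.support_nil, List.mem_singleton, forall_eq, conforming_nil,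
      true_and]
    exact ⟨fun h => ⟨h, h.edges_notMem_start⟩, And.left⟩
  | cons h p ih =>
    simp only [Walk.cons_append, conforming_cons_iff, ih, Walk.edges_cons, Walk.edges_append,
      Walk.support_cons, List.mem_cons, List.mem_append, forall_eq_or_imp]
    grind

end Conforming

namespace SimpleGraph.Walk

variable {V : Type*} {G : SimpleGraph V}

theorem exists_append_append_of_mem_support {s t x y : V} (P : G.Walk s t)
    (hx : x ∈ P.support) (hy : y ∈ P.support) :
    (∃ (p : G.Walk s x) (r : G.Walk x y) (q : G.Walk y t), P = p.append (r.append q)) ∨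
      ∃ (p : G.Walk s y) (r : G.Walk y x) (q : G.Walk x t), P = p.append (r.append q) := by
  classical
  have hPx := P.take_spec hx
  rw [← hPx, mem_support_append_iff] at hy
  rcases hy with hy | hy
  · right
    set p := P.takeUntil x hx
    exact ⟨p.takeUntil y hy, p.dropUntil y hy, P.dropUntil x hx,
      by rw [append_assoc, p.take_spec hy, hPx]⟩
  · left
    exact ⟨_, _, _, by rw [← hPx, ← (P.dropUntil x hx).take_spec hy]⟩

theorem IsPath.append_cons_of_append_append {s a b t : V} {p : G.Walk s a} {r : G.Walk a b}
    {q : G.Walk b t} (hP : (p.append (r.append q)).IsPath) (hab : G.Adj a b) :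
    (p.append (cons hab q)).IsPath := by
  rw [isPath_def] at hP ⊢
  refine hP.sublist ?_
  rw [support_append, support_append, tail_support_append, support_cons, List.tail_cons]
  refine List.Sublist.append_left ?_ _
  rw [← cons_tail_support q, ← List.singleton_append]
  exact (List.singleton_sublist.mpr (end_mem_tail_support_of_ne hab.ne r)).append_right _

theorem two_le_length_of_adj_of_notMem_edges {a b : V} (hab : G.Adj a b) (r : G.Walk a b)
    (hr : s(a, b) ∉ r.edges) : 2 ≤ r.length := by
  cases r with
  | nil => exact absurd rfl hab.ne
  | cons h r' =>
    cases r' with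
    | nil => simp at hr
    | cons => simp

end SimpleGraph.Walk

theorem Set.ncard_le_length_add_length_mul {α β : Type*} [Finite β] {S : Set β} (E : List β)
    (L : List α) (g : α → Set β) {μ : ℕ} (hg : ∀ x ∈ L, (g x).ncard ≤ μ)
    (hS : ∀ e ∈ S, e ∈ E ∨ ∃ x ∈ L, e ∈ g x) :
    S.ncard ≤ E.length + L.length * μ := by
  classical
  calc S.ncard ≤ ((E.toFinset : Set β) ∪ ⋃ x ∈ L.toFinset, g x).ncard :=
        Set.ncard_le_ncard (fun e he => by simpa using hS e he) (Set.toFinite _)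
    _ ≤ (E.toFinset : Set β).ncard + (⋃ x ∈ L.toFinset, g x).ncard := Set.ncard_union_le _ _
    _ ≤ E.length + ∑ x ∈ L.toFinset, (g x).ncard := by
        rw [Set.ncard_coe_finset]
        exact add_le_add E.toFinset_card_le (L.toFinset.set_ncard_biUnion_le g)
    _ ≤ E.length + L.toFinset.card * μ := by
        grw [Finset.sum_le_card_nsmul _ _ _ (by simpa using hg), smul_eq_mul]
    _ ≤ E.length + L.length * μ := by grw [L.toFinset_card_le]

structure IsShortestConformingPath {V : Type*} {G : SimpleGraph V} (f : V → Set (Sym2 V))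
    {s t : V} (P : G.Walk s t) : Prop where
  isPath : P.IsPath
  conforming : Conforming f P
  length_support_le : ∀ Q : G.Walk s t, Q.IsPath → Conforming f Q →
    P.support.length ≤ Q.support.length

namespace IsShortestConformingPath

variable {V : Type*} {G : SimpleGraph V} {f : V → Set (Sym2 V)}

theorem exists_mem_support_of_adj {s a b t : V} {p : G.Walk s a} {r : G.Walk a b}
    {q : G.Walk b t} (hP : IsShortestConformingPath f (p.append (r.append q)))
    (hab : G.Adj a b) (hr : s(a, b) ∉ r.edges) : ∃ x ∈ p.support, s(a, b) ∈ f x := by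
  by_contra! hdel
  obtain ⟨hp, hrq, hcross⟩ := (conforming_append_iff _ _).mp hP.conforming
  obtain ⟨-, hq, hrq_cross⟩ := (conforming_append_iff r q).mp hrq
  have hQ : Conforming f (p.append (Walk.cons hab q)) := by
    refine (conforming_append_iff _ _).mpr
      ⟨hp, (conforming_cons_iff hab q).mpr ⟨?_, hq⟩, ?_⟩
    · simp only [Walk.edges_cons, List.mem_cons, forall_eq_or_imp]
      exact ⟨hdel a p.end_mem_support, hrq_cross a r.start_mem_support⟩
    · intro x hx
      simp only [Walk.edges_cons, List.mem_cons, forall_eq_or_imp]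
      exact ⟨hdel x hx, fun e he => hcross x hx e (by simp [he])⟩
  have hle := hP.length_support_le _ (hP.isPath.append_cons_of_append_append hab) hQ
  simp only [Walk.length_support, Walk.length_append, Walk.length_cons] at hle
  have := r.two_le_length_of_adj_of_notMem_edges hab hr
  omega

theorem mem_edges_or_exists_mem_support_of_adj {s t : V} {P : G.Walk s t}
    (hP : IsShortestConformingPath f P) {a b : V} (hab : G.Adj a b) (ha : a ∈ P.support)
    (hb : b ∈ P.support) : s(a, b) ∈ P.edges ∨ ∃ x ∈ P.support, s(a, b) ∈ f x := by
  refine or_iff_not_imp_left.mpr fun hab_edges => ?_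
  rcases P.exists_append_append_of_mem_support ha hb with ⟨p, r, q, rfl⟩ | ⟨p, r, q, rfl⟩
  · obtain ⟨x, hx, hfx⟩ := hP.exists_mem_support_of_adj hab
      fun h => hab_edges (by simp [Walk.edges_append, h])
    exact ⟨x, by simp [Walk.mem_support_append_iff, hx], hfx⟩
  · rw [Sym2.eq_swap] at hab_edges ⊢
    obtain ⟨x, hx, hfx⟩ := hP.exists_mem_support_of_adj hab.symm
      fun h => hab_edges (by simp [Walk.edges_append, h])
    exact ⟨x, by simp [Walk.mem_support_append_iff, hx], hfx⟩

end IsShortestConformingPath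

/-- If `P` is a shortest `f`-conforming path on `k` vertices and `|f(v)| ≤ μ` for
all `v`, then the subgraph of `G` induced by the vertices of `P` has at most
`kμ + k - 1` edges. -/
theorem stmt8 {V : Type*} [Fintype V] (G : SimpleGraph V) (f : V → Set (Sym2 V))
    (μ : ℕ) (hμ : ∀ v : V, (f v).ncard ≤ μ) {s t : V}
    (P : G.Walk s t) (hP : P.IsPath) (hc : Conforming f P)
    (hmin : ∀ Q : G.Walk s t, Q.IsPath → Conforming f Q →
      P.support.length ≤ Q.support.length) :
    {e : Sym2 V | e ∈ G.edgeSet ∧ ∀ x ∈ e, x ∈ P.support}.ncard ≤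
      P.support.length * μ + P.support.length - 1 := by
  have hshort : IsShortestConformingPath f P := ⟨hP, hc, hmin⟩
  have hcover : ∀ e ∈ {e : Sym2 V | e ∈ G.edgeSet ∧ ∀ x ∈ e, x ∈ P.support},
      e ∈ P.edges ∨ ∃ x ∈ P.support, e ∈ f x := by
    rintro ⟨a, b⟩ ⟨hab, hsupp⟩
    exact hshort.mem_edges_or_exists_mem_support_of_adj hab (hsupp a (Sym2.mem_mk_left a b))
      (hsupp b (Sym2.mem_mk_right a b))
  have hcard := Set.ncard_le_length_add_length_mul P.edges P.support f (fun x _ => hμ x) hcover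
  rw [Walk.length_edges] at hcard
  have := P.length_support
  omega
end

section
/- Let (G, f) be a self-deleting graph in which every edge of every deletion set is incident to the vertex deleting it (i.e., for all v and all e ∈ f(v), v ∈ e). Define a directed graph D on V(G) with an arc (u, v) whenever {u, v} ∈ E(G) and {u, v} ∉ f(v). Then for any s, t ∈ V(G): there is an f-conforming s-t path in (G, f) if and only if there is a directed s-t path in D. -/
/-!
Conformity of a walk implies the local condition `s(vᵢ, vᵢ₊₁) ∉ f(vᵢ)` on each of its darts,
i.e. it follows arcs of the digraph. Conversely, when deletion sets consist of incident
edges, the local condition already makes a *path* conforming, and a directed walk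
shortens (via `bypass`, which only drops darts) to such a path.
-/

open SimpleGraph

section

variable {V : Type*} {G : SimpleGraph V} {u v : V}

theorem SimpleGraph.Walk.forall_mem_darts_iff_getVert {P : V → V → Prop} (p : G.Walk u v) :
    (∀ d ∈ p.darts, P d.fst d.snd) ↔ ∀ i < p.length, P (p.getVert i) (p.getVert (i + 1)) := by
  simp [List.forall_mem_iff_getElem, Walk.darts_getElem_eq_getVert]

theorem SimpleGraph.reflTransGen_iff_exists_walk {R : V → V → Prop} :
    Relation.ReflTransGen (fun x y => G.Adj x y ∧ R x y) u v ↔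
      ∃ p : G.Walk u v, ∀ d ∈ p.darts, R d.fst d.snd := by
  constructor
  · intro h
    induction h with
    | refl => exact ⟨.nil, by simp⟩
    | tail _ hxy ih =>
      obtain ⟨p, hp⟩ := ih
      refine ⟨p.concat hxy.1, ?_⟩
      simp only [Walk.darts_concat, List.concat_eq_append, List.mem_append, List.mem_singleton]
      rintro d (hd | rfl)
      exacts [hp d hd, hxy.2]
  · rintro ⟨p, hp⟩
    induction p with
    | nil => exact .refl
    | cons hxy q ih =>
      simp only [Walk.darts_cons, List.mem_cons, forall_eq_or_imp] at hp
      exact .head ⟨hxy, hp.1⟩ (ih hp.2)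

theorem conforming_iff_getVert (f : V → Set (Sym2 V)) (p : G.Walk u v) :
    Conforming f p ↔
      ∀ i < p.length, ∀ j ≤ i, s(p.getVert i, p.getVert (i + 1)) ∉ f (p.getVert j) := by
  unfold Conforming
  constructor
  · intro h i hi j hji
    simpa [Walk.getElem_edges, Walk.support_getElem_eq_getVert] using
      h i j (by simpa using hi) (by simp; omega) hji
  · intro h i j hi hj hji
    simpa [Walk.getElem_edges, Walk.support_getElem_eq_getVert] using
      h i (by simpa using hi) j hji

theorem Conforming.forall_mem_darts {f : V → Set (Sym2 V)} {p : G.Walk u v}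
    (hc : Conforming f p) : ∀ d ∈ p.darts, s(d.fst, d.snd) ∉ f d.fst :=
  (p.forall_mem_darts_iff_getVert (P := fun x y => s(x, y) ∉ f x)).2 fun i hi =>
    (conforming_iff_getVert f p).1 hc i hi i le_rfl

/-- On a path, an edge `s(vᵢ, vᵢ₊₁)` contains no earlier vertex `vⱼ`, `j < i`, so only the
deletion set of its tail `vᵢ` can contain it. -/
theorem SimpleGraph.Walk.IsPath.conforming_of_forall_mem_darts {f : V → Set (Sym2 V)}
    (hinc : ∀ v : V, ∀ e ∈ f v, v ∈ e) {p : G.Walk u v} (hp : p.IsPath)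
    (h : ∀ d ∈ p.darts, s(d.fst, d.snd) ∉ f d.fst) : Conforming f p := by
  rw [p.forall_mem_darts_iff_getVert (P := fun x y => s(x, y) ∉ f x)] at h
  rw [conforming_iff_getVert]
  intro i hi j hji he
  rcases Sym2.mem_iff.1 (hinc _ _ he) with hj | hj
  · obtain rfl : j = i := hp.getVert_injOn (by simp; omega) (by simp; omega) hj
    exact h j hi he
  · have : j = i + 1 := hp.getVert_injOn (by simp; omega) (by simp; omega) hj
    omega

end

/-- If every vertex deletes only edges incident to it, then `f`-conforming `s`-`t`
paths exist iff `t` is reachable from `s` in the digraph with arcs `(u, v)` for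
`{u,v} ∈ E(G)` with `{u,v} ∉ f(u)`. -/
theorem stmt13 {V : Type*} (G : SimpleGraph V) (f : V → Set (Sym2 V))
    (hinc : ∀ v : V, ∀ e ∈ f v, v ∈ e) (s t : V) :
    (∃ p : G.Walk s t, p.IsPath ∧ Conforming f p) ↔
      Relation.ReflTransGen (fun u v => G.Adj u v ∧ s(u, v) ∉ f u) s t := by
  classical
  rw [reflTransGen_iff_exists_walk]
  constructor
  · rintro ⟨p, -, hc⟩
    exact ⟨p, hc.forall_mem_darts⟩
  · rintro ⟨p, hp⟩
    exact ⟨p.bypass, p.bypass_isPath, p.bypass_isPath.conforming_of_forall_mem_darts hinc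
      fun d hd => hp d (p.darts_bypass_subset_darts hd)⟩
end

section
/- Let G be an outerplanar graph with a vertex cover S, and let D be the set of vertices outside S having at least 3 neighbors in S (hence degree ≥ 3 in G). Then |D| ≤ 2|S| − 3 (assuming D ∪ S is nonempty with |D ∪ S| ≥ 2). -/
/-- `G` has `H` as a minor: there are nonempty, pairwise disjoint, connected
branch sets in `G`, one for each vertex of `H`, with an edge of `G` between the
branch sets of any two adjacent vertices of `H`. -/
def HasMinor {V W : Type*} (G : SimpleGraph V) (H : SimpleGraph W) : Prop :=
  ∃ φ : W → Set V,
    (∀ w, (φ w).Nonempty) ∧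
    (∀ w, (G.induce (φ w)).Connected) ∧
    (Pairwise fun a b => Disjoint (φ a) (φ b)) ∧
    (∀ a b, H.Adj a b → ∃ x ∈ φ a, ∃ y ∈ φ b, G.Adj x y)

/-- A graph is outerplanar iff it has neither `K₄` nor `K_{2,3}` as a minor. -/
def Outerplanar {V : Type*} (G : SimpleGraph V) : Prop :=
  ¬ HasMinor G (SimpleGraph.completeGraph (Fin 4)) ∧
    ¬ HasMinor G (completeBipartiteGraph (Fin 2) (Fin 3))

/-!
A graph on `n ≥ 2` vertices without a `K₄` minor has at most `2n - 3` edges. By induction on `n`: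
contracting an edge that lies in at most one triangle loses at most two edges; and if every edge
lies in two triangles, then the neighbourhood of a vertex has minimum degree two, hence contains a
cycle, and the cycle together with that vertex is a `K₄` minor.

In the situation of the theorem, every vertex of `D` has at least three neighbours in `S`, so the
bipartite graph between `D` and `S` is a subgraph of `G` on `D ∪ S` with at least `3|D|` edges,
whence `3|D| ≤ 2(|D| + |S|) - 3`.
-/

open Finset SimpleGraph

section

variable {V W X : Type*}

theorem SimpleGraph.Connected.induce_image {G' : SimpleGraph W} {G : SimpleGraph V}
    (f : G' →g G) {s : Set W} (h : (G'.induce s).Connected) : (G.induce (f '' s)).Connected :=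
  h.map (induceHom f (Set.mapsTo_image f s)) <| by
    rintro ⟨_, x, hx, rfl⟩
    exact ⟨⟨x, hx⟩, rfl⟩

theorem HasMinor.map {G' : SimpleGraph W} {G : SimpleGraph V} {H : SimpleGraph X}
    (f : G' →g G) (hf : Function.Injective f) (h : HasMinor G' H) : HasMinor G H := by
  obtain ⟨φ, hne, hconn, hdisj, hadj⟩ := h
  refine ⟨fun x => f '' φ x, fun x => (hne x).image f, fun x => (hconn x).induce_image f,
    fun x y hxy => (Set.disjoint_image_iff hf).2 (hdisj hxy), fun x y hxy => ?_⟩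
  obtain ⟨a, ha, b, hb, hab⟩ := hadj x y hxy
  exact ⟨f a, Set.mem_image_of_mem f ha, f b, Set.mem_image_of_mem f hb, f.map_adj hab⟩

theorem HasMinor.mono {G G' : SimpleGraph V} {H : SimpleGraph X} (hle : G' ≤ G)
    (h : HasMinor G' H) : HasMinor G H :=
  h.map (Hom.ofLE hle) Function.injective_id

theorem SimpleGraph.Connected.induce_preimage {G : SimpleGraph V} {C : SimpleGraph W}
    {π : V → W} (hπ : ∀ w, (G.induce (π ⁻¹' {w})).Connected) (hC : C ≤ G.map π) {s : Set W}
    (hs : (C.induce s).Connected) : (G.induce (π ⁻¹' s)).Connected := by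
  have hfiber : ∀ v v' : π ⁻¹' s, π v = π v' → (G.induce (π ⁻¹' s)).Reachable v v' := by
    intro v v' h
    have hsub : π ⁻¹' {π v} ⊆ π ⁻¹' s := fun x hx => by
      simp only [Set.mem_preimage, Set.mem_singleton_iff] at hx ⊢
      exact hx ▸ v.2
    exact ((hπ (π v)).preconnected ⟨v, rfl⟩ ⟨v', h.symm⟩).map (G.induceHomOfLE hsub).toHom
  choose σ₀ hσ₀ using fun w : s => (⟨_, (hπ w).nonempty.some.2⟩ : ∃ v, π v = w)
  let σ : s → π ⁻¹' s := fun w => ⟨σ₀ w, show π (σ₀ w) ∈ s from (hσ₀ w).symm ▸ w.2⟩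
  have hσ : ∀ w, π (σ w) = w := hσ₀
  have hstep : ∀ w w' : s, (C.induce s).Adj w w' →
      (G.induce (π ⁻¹' s)).Reachable (σ w) (σ w') := by
    intro w w' h
    obtain ⟨-, x, y, hxy, hx, hy⟩ := hC h
    have hx' : x ∈ π ⁻¹' s := by simp [hx, w.2]
    have hy' : y ∈ π ⁻¹' s := by simp [hy, w'.2]
    exact ((hfiber _ ⟨x, hx'⟩ (by simp [hσ, hx])).trans
      (show (G.induce (π ⁻¹' s)).Adj ⟨x, hx'⟩ ⟨y, hy'⟩ from hxy).reachable).trans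
      (hfiber ⟨y, hy'⟩ _ (by simp [hσ, hy]))
  have hlift : ∀ w w' : s, (C.induce s).Reachable w w' →
      (G.induce (π ⁻¹' s)).Reachable (σ w) (σ w') := by
    intro w w' h
    rw [reachable_iff_reflTransGen] at h ⊢
    exact Relation.ReflTransGen.lift' σ
      (fun a b hab => (reachable_iff_reflTransGen _ _).1 (hstep a b hab)) w w' h
  obtain ⟨w₀⟩ := hs.nonempty
  have : Nonempty (π ⁻¹' s) := ⟨σ w₀⟩
  refine ⟨fun v v' => ?_⟩
  let w : s := ⟨π v, v.2⟩
  let w' : s := ⟨π v', v'.2⟩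
  exact ((hfiber v (σ w) (hσ w).symm).trans (hlift w w' (hs.preconnected w w'))).trans
    (hfiber (σ w') v' (hσ w'))

theorem HasMinor.of_le_map {G : SimpleGraph V} {C : SimpleGraph W} {H : SimpleGraph X}
    (π : V → W) (hπ : ∀ w, (G.induce (π ⁻¹' {w})).Connected) (hC : C ≤ G.map π)
    (h : HasMinor C H) : HasMinor G H := by
  obtain ⟨φ, hne, hconn, hdisj, hadj⟩ := h
  refine ⟨fun x => π ⁻¹' φ x, fun x => ?_, fun x => (hconn x).induce_preimage hπ hC,
    fun x y hxy => (hdisj hxy).preimage π, fun x y hxy => ?_⟩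
  · obtain ⟨w, hw⟩ := hne x
    obtain ⟨v, hv⟩ := (hπ w).nonempty.some
    exact ⟨v, by simpa [Set.mem_singleton_iff.1 hv] using hw⟩
  · obtain ⟨a, ha, b, hb, hab⟩ := hadj x y hxy
    obtain ⟨-, a', b', h, rfl, rfl⟩ := hC hab
    exact ⟨a', ha, b', hb, h⟩

theorem hasMinor_completeGraph_of_lt {ι : Type*} [LinearOrder ι] {G : SimpleGraph V}
    (φ : ι → Set V) (hne : ∀ i, (φ i).Nonempty) (hconn : ∀ i, (G.induce (φ i)).Connected)
    (hdisj : ∀ i j, i < j → Disjoint (φ i) (φ j))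
    (hadj : ∀ i j, i < j → ∃ x ∈ φ i, ∃ y ∈ φ j, G.Adj x y) :
    HasMinor G (completeGraph ι) := by
  refine ⟨φ, hne, hconn, fun i j hij => ?_, fun i j hij => ?_⟩
  · rcases hij.lt_or_gt with h | h
    exacts [hdisj i j h, (hdisj j i h).symm]
  · rcases hij.lt_or_gt with h | h
    · exact hadj i j h
    · obtain ⟨x, hx, y, hy, hxy⟩ := hadj j i h
      exact ⟨y, hy, x, hx, hxy.symm⟩

theorem HasMinor.completeGraph_succ_of_induce_neighborSet {G : SimpleGraph V} {u : V} {n : ℕ}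
    (h : HasMinor (G.induce (G.neighborSet u)) (completeGraph (Fin n))) :
    HasMinor G (completeGraph (Fin (n + 1))) := by
  obtain ⟨φ, hne, hconn, hdisj, hadj⟩ := h
  let ι := (Embedding.induce (G := G) (G.neighborSet u)).toHom
  have hu : ∀ i, u ∉ ι '' φ i := fun i ⟨x, _, hx⟩ => G.ne_of_adj x.2 hx.symm
  have hconn₀ : (G.induce {u}).Connected := by
    rw [induce_singleton_eq_top]
    exact connected_top
  refine ⟨Fin.cons {u} fun i => ι '' φ i, Fin.cases (Set.singleton_nonempty u) fun i =>
    (hne i).image ι, Fin.cases hconn₀ fun i => (hconn i).induce_image ι, ?_, ?_⟩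
  · intro i j hij
    cases i using Fin.cases <;> cases j using Fin.cases
    · exact absurd rfl hij
    · exact Set.disjoint_singleton_left.2 (hu _)
    · exact Set.disjoint_singleton_right.2 (hu _)
    · exact (Set.disjoint_image_iff Subtype.val_injective).2
        (hdisj fun h => hij (congrArg Fin.succ h))
  · intro i j hij
    cases i using Fin.cases <;> cases j using Fin.cases
    · exact absurd rfl hij.ne
    · obtain ⟨x, hx⟩ := hne _
      exact ⟨u, rfl, x, ⟨x, hx, rfl⟩, x.2⟩
    · obtain ⟨x, hx⟩ := hne _
      exact ⟨x, ⟨x, hx, rfl⟩, u, rfl, x.2.symm⟩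
    · obtain ⟨x, hx, y, hy, hxy⟩ := hadj _ _ fun h => hij.ne (congrArg Fin.succ h)
      exact ⟨x, ⟨x, hx, rfl⟩, y, ⟨y, hy, rfl⟩, hxy⟩

theorem hasMinor_completeGraph_three_of_isCycle {G : SimpleGraph V} {v : V} {c : G.Walk v v}
    (hc : c.IsCycle) : HasMinor G (completeGraph (Fin 3)) := by
  obtain ⟨w, h₁, p, rfl⟩ : ∃ w h₁ p, c = Walk.cons (v := w) h₁ p := by
    cases c with
    | nil => exact absurd hc Walk.not_isCycle_nil
    | cons h p => exact ⟨_, h, p, rfl⟩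
  rw [Walk.cons_isCycle_iff] at hc
  obtain ⟨w₂, h₂, r, rfl⟩ : ∃ w₂ h₂ r, p = Walk.cons (v := w₂) h₂ r := by
    cases p with
    | nil => exact absurd h₁ G.irrefl
    | cons h r => exact ⟨_, h, r, rfl⟩
  have hr : ¬r.Nil := by
    intro hr
    cases hr
    exact hc.2 (by simp [Sym2.eq_swap])
  have hnodup := hc.1.support_nodup
  rw [Walk.support_cons, ← Walk.support_dropLast_concat hr] at hnodup
  -- the cycle is `v, w, w₂, …, r.penultimate, v`; the branch sets are `{v}`, `{w}` and the arc
  -- `w₂ … r.penultimate`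
  set Q := {x | x ∈ r.dropLast.support}
  have hwQ : w ∉ Q := fun h => (List.nodup_cons.1 hnodup).1 (List.mem_append_left _ h)
  have hvQ : v ∉ Q := fun h =>
    List.disjoint_of_nodup_append (List.nodup_cons.1 hnodup).2 h (by simp)
  refine hasMinor_completeGraph_of_lt ![{v}, {w}, Q] ?_ ?_ ?_ ?_
  · simpa [Fin.forall_fin_succ] using ⟨w₂, r.dropLast.start_mem_support⟩
  · simpa [Fin.forall_fin_succ] using r.dropLast.connected_induce_support
  · simpa [Fin.forall_fin_succ] using ⟨⟨h₁.ne', hvQ⟩, hwQ⟩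
  · simpa [Fin.forall_fin_succ] using ⟨⟨h₁, _, r.dropLast.end_mem_support,
      (r.adj_penultimate hr).symm⟩, _, r.dropLast.start_mem_support, h₂⟩

theorem SimpleGraph.not_isAcyclic_of_forall_two_le_degree [Fintype V] [Nonempty V]
    {G : SimpleGraph V} [DecidableRel G.Adj] (h : ∀ v, 2 ≤ G.degree v) : ¬G.IsAcyclic := by
  intro hG
  obtain ⟨u, v, p, hp, hmax⟩ := Walk.exists_isPath_forall_isPath_length_le_length G
  obtain ⟨w, hw, hne⟩ := exists_mem_ne ((card_neighborFinset_eq_degree G u).symm ▸ h u) p.snd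
  rw [mem_neighborFinset] at hw
  have hmem : w ∈ p.support := by
    by_contra hw'
    simpa using hmax _ _ (Walk.cons hw.symm p) (hp.cons hw')
  exact hne (hG.eq_snd_of_adj_start hp hw hmem)

theorem hasMinor_completeGraph_four_of_two_le_card_commonNeighbors [Fintype V] [DecidableEq V]
    {G : SimpleGraph V} [DecidableRel G.Adj] {u v : V} (huv : G.Adj u v)
    (h : ∀ w, G.Adj u w → 2 ≤ #(G.neighborFinset u ∩ G.neighborFinset w)) :
    HasMinor G (completeGraph (Fin 4)) := by
  have : Nonempty (G.neighborSet u) := ⟨⟨v, huv⟩⟩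
  have hdeg : ∀ x, 2 ≤ (G.induce (G.neighborSet u)).degree x := by
    intro x
    rw [← card_neighborFinset_eq_degree, ← card_map, map_neighborFinset_induce,
      ← neighborFinset_def, inter_comm]
    exact h x x.2
  obtain ⟨x, c, hc⟩ : ∃ x, ∃ c : (G.induce (G.neighborSet u)).Walk x x, c.IsCycle := by
    by_contra! hcyc
    exact not_isAcyclic_of_forall_two_le_degree hdeg hcyc
  exact (hasMinor_completeGraph_three_of_isCycle hc).completeGraph_succ_of_induce_neighborSet

def contractMap [DecidableEq V] {a b : V} (hab : a ≠ b) (x : V) : ({b}ᶜ : Set V) :=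
  if hx : x = b then ⟨a, hab⟩ else ⟨x, hx⟩

theorem coe_contractMap [DecidableEq V] {a b : V} (hab : a ≠ b) (x : V) :
    (contractMap hab x : V) = if x = b then a else x := by
  unfold contractMap
  split_ifs <;> rfl

theorem connected_induce_preimage_contractMap [DecidableEq V] {G : SimpleGraph V} {a b : V}
    (hab : G.Adj a b) (w : ({b}ᶜ : Set V)) :
    (G.induce (contractMap hab.ne ⁻¹' {w})).Connected := by
  have hw : (w : V) ≠ b := w.2
  by_cases hwa : (w : V) = a
  · have : contractMap hab.ne ⁻¹' {w} = {a, b} := by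
      ext x
      simp only [Set.mem_preimage, Set.mem_singleton_iff, Subtype.ext_iff, coe_contractMap,
        Set.mem_insert_iff]
      grind
    rw [this]
    exact induce_pair_connected_of_adj hab
  · have : contractMap hab.ne ⁻¹' {w} = {(w : V)} := by
      ext x
      simp only [Set.mem_preimage, Set.mem_singleton_iff, Subtype.ext_iff, coe_contractMap]
      grind
    rw [this, induce_singleton_eq_top]
    exact connected_top

/-- Contracting `ab` loses only the edge `ab` itself and, for each common neighbour `c` of `a`
and `b`, one of the two edges `ac`, `bc`. -/
theorem card_edgeFinset_le_card_edgeFinset_map_contractMap [Fintype V] [DecidableEq V]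
    {G : SimpleGraph V} [DecidableRel G.Adj] {a b : V} (hab : G.Adj a b) :
    #G.edgeFinset ≤ #(G.map (contractMap hab.ne)).edgeFinset + 1 +
      #(G.neighborFinset a ∩ G.neighborFinset b) := by
  set π := contractMap hab.ne
  have hπ : ∀ x y, π x = π y ↔ (if x = b then a else x) = if y = b then a else y := by
    intro x y
    rw [Subtype.ext_iff, coe_contractMap, coe_contractMap]
  set lost := insert s(a, b) ((G.neighborFinset a ∩ G.neighborFinset b).image (s(b, ·)))
  have hmaps : ∀ e ∈ G.edgeFinset \ lost, Sym2.map π e ∈ (G.map π).edgeFinset := by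
    rintro ⟨x, y⟩ he
    simp only [lost, mem_sdiff, mem_edgeFinset, mem_edgeSet, mem_insert, mem_image, mem_inter,
      mem_neighborFinset, Sym2.eq_iff] at he
    simp only [Sym2.map_mk, mem_edgeFinset, mem_edgeSet]
    refine map_adj_apply' he.1 fun h => ?_
    rw [hπ] at h
    grind [G.irrefl, G.adj_comm]
  have hinj : Set.InjOn (Sym2.map π) ↑(G.edgeFinset \ lost) := by
    rintro ⟨x, y⟩ he ⟨x', y'⟩ he' heq
    simp only [lost, coe_sdiff, Set.mem_sdiff, mem_coe, mem_edgeFinset, mem_edgeSet, mem_insert,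
      mem_image, mem_inter, mem_neighborFinset, Sym2.eq_iff] at he he'
    simp only [Sym2.map_mk, Sym2.eq_iff, hπ] at heq ⊢
    grind [G.irrefl, G.adj_comm]
  calc #G.edgeFinset ≤ #(G.edgeFinset \ lost) + #lost := card_le_card_sdiff_add_card
    _ ≤ #(G.map π).edgeFinset + (#(G.neighborFinset a ∩ G.neighborFinset b) + 1) :=
      add_le_add (card_le_card_of_injOn _ hmaps hinj)
        ((card_insert_le _ _).trans (by gcongr; exact card_image_le))
    _ = _ := by ring

theorem card_edgeFinset_add_three_le_of_not_hasMinor [Fintype V] {G : SimpleGraph V}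
    [DecidableRel G.Adj] (hV : 2 ≤ Fintype.card V) (hG : ¬HasMinor G (completeGraph (Fin 4))) :
    #G.edgeFinset + 3 ≤ 2 * Fintype.card V := by
  classical
  induction hn : Fintype.card V generalizing V with
  | zero => omega
  | succ n ih =>
    obtain hn2 | hn3 : n + 1 = 2 ∨ 3 ≤ n + 1 := by omega
    · have h := G.card_edgeFinset_le_card_choose_two
      rw [hn, hn2, Nat.choose_self] at h
      omega
    by_cases hcontr : ∃ a b, G.Adj a b ∧ #(G.neighborFinset a ∩ G.neighborFinset b) ≤ 1
    · obtain ⟨a, b, hab, hcommon⟩ := hcontr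
      have hcard : Fintype.card ({b}ᶜ : Set V) = n := by
        rw [Fintype.card_compl_set, hn, Fintype.card_unique]
        rfl
      have hminor : ¬HasMinor (G.map (contractMap hab.ne)) (completeGraph (Fin 4)) := fun h =>
        hG (h.of_le_map _ (connected_induce_preimage_contractMap hab) le_rfl)
      have := ih (by omega) hminor hcard
      have := card_edgeFinset_le_card_edgeFinset_map_contractMap hab
      omega
    · push Not at hcontr
      by_cases hbot : G = ⊥
      · rw [edgeFinset_eq_empty.2 hbot, card_empty]
        omega
      · obtain ⟨a, b, hab⟩ := ne_bot_iff_exists_adj.1 hbot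
        exact absurd (hasMinor_completeGraph_four_of_two_le_card_commonNeighbors hab
          fun w hw => hcontr a w hw) hG

theorem card_edgeFinset_add_three_le_of_support_subset [Fintype V] [DecidableEq V]
    {G : SimpleGraph V} [DecidableRel G.Adj] {T : Finset V} (hT : 2 ≤ #T) (hsupp : G.support ⊆ T)
    (hG : ¬HasMinor G (completeGraph (Fin 4))) : #G.edgeFinset + 3 ≤ 2 * #T := by
  have := card_edgeFinset_add_three_le_of_not_hasMinor (G := G.induce T) (by simpa using hT)
    fun h => hG (h.map (Embedding.induce _).toHom Subtype.val_injective)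
  convert this using 3
  · convert (card_edgeFinset_induce_of_support_subset hsupp).symm
  · simp

theorem mul_card_le_card_edgeFinset_between [Fintype V] [DecidableEq V] {G : SimpleGraph V}
    [DecidableRel G.Adj] {D S : Finset V} (hDS : Disjoint D S) {k : ℕ}
    (hk : ∀ d ∈ D, k ≤ #(S.filter (G.Adj d))) : k * #D ≤ #(G.between D S).edgeFinset := by
  have hdeg : ∀ d ∈ D, (G.between D S).degree d = #(S.filter (G.Adj d)) := by
    intro d hd
    rw [← card_neighborFinset_eq_degree]
    congr 1
    ext x
    simp [between_adj, hd, disjoint_left.1 hDS hd, and_comm]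
  rw [← isBipartiteWith_sum_degrees_eq_card_edges (between_isBipartiteWith (disjoint_coe.2 hDS)),
    sum_congr rfl hdeg, mul_comm, ← smul_eq_mul, ← sum_const]
  exact sum_le_sum hk

end

theorem stmt14_general {V : Type*} [Fintype V] [DecidableEq V] (G : SimpleGraph V)
    [DecidableRel G.Adj] (hG : Outerplanar G)
    (S : Finset V)
    (D : Finset V)
    (hD : D = Finset.univ.filter fun v => v ∉ S ∧ 3 ≤ (S.filter (G.Adj v)).card) :
    D.card ≤ 2 * S.card - 3 := by
  have hD' : ∀ d ∈ D, d ∉ S ∧ 3 ≤ #(S.filter (G.Adj d)) := fun d hd => by simpa [hD] using hd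
  have hDS : Disjoint D S := Finset.disjoint_left.2 fun d hd => (hD' d hd).1
  rcases D.eq_empty_or_nonempty with rfl | ⟨d, hd⟩
  · simp
  have hS : 3 ≤ #S := (hD' d hd).2.trans (card_filter_le _ _)
  have hedges := mul_card_le_card_edgeFinset_between hDS fun d hd => (hD' d hd).2
  have hbound := card_edgeFinset_add_three_le_of_support_subset (T := D ∪ S)
    (by rw [card_union_of_disjoint hDS]; omega)
    (by simpa using isBipartiteWith_support_subset (between_isBipartiteWith (disjoint_coe.2 hDS)))
    fun h => hG.1 (h.mono between_le)
  rw [card_union_of_disjoint hDS] at hbound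
  omega

/-- In an outerplanar graph with vertex cover `S`, the set `D` of vertices outside
`S` with at least 3 neighbors in `S` satisfies `|D| ≤ 2|S| - 3` (when `|D ∪ S| ≥ 2`). -/
theorem stmt14 {V : Type*} [Fintype V] [DecidableEq V] (G : SimpleGraph V)
    [DecidableRel G.Adj] (hG : Outerplanar G)
    (S : Finset V) (hS : ∀ u v : V, G.Adj u v → u ∈ S ∨ v ∈ S)
    (D : Finset V)
    (hD : D = Finset.univ.filter fun v => v ∉ S ∧ 3 ≤ (S.filter (G.Adj v)).card)
    (hne : 2 ≤ (D ∪ S).card) :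
    D.card ≤ 2 * S.card - 3 :=
  stmt14_general G hG S D hD
end
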